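/- For every x ∈ (0,1): x · ((c+1)d)/(a(c−b)) · ( (c/b)·W(x;a,b;c,d) − W(x;a,b+1;c+1,d) ) = W(x;a+1,b+1;d+1,c+2). (First component of the matrix identity x·Φ(x)·(W(x;a,b;c,d), W(x;a,b+1;c+1,d))ᵀ = (W(x;a+1,b+1;d+1,c+2), W(x;a+1,b+2;d+2,c+2))ᵀ.) -/

import Mathlib

open MeasureTheory

/-- Pochhammer symbol `(z)_n = z (z+1) ⋯ (z+n-1)`. -/
noncomputable def poch (z : ℝ) (n : ℕ) : ℝ := ∏ i ∈ Finset.range n, (z + i)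

/-- Gauss hypergeometric series `₂F₁(α, β; γ; z)`. -/
noncomputable def twoF1 (α β γ z : ℝ) : ℝ :=
  ∑' n : ℕ, (poch α n * poch β n) / (poch γ n * n.factorial) * z ^ n

/-- The weight function `W(x; a, b; c, d)`. -/
noncomputable def W (a b c d : ℝ) (x : ℝ) : ℝ :=
  (Real.Gamma c * Real.Gamma d) /
      (Real.Gamma a * Real.Gamma b * Real.Gamma (c + d - a - b)) *
    (x ^ (a - 1) * (1 - x) ^ (c + d - a - b - 1) *
      twoF1 (c - b) (d - b) (c + d - a - b) (1 - x))

/-!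
Clearing the Gamma factors (via `Γ(s + 1) = s Γ(s)`) and the common factor
`x ^ (a - 1) (1 - x) ^ (δ - 1)`, the identity becomes Gauss's contiguous relation
`F(α, β; γ; z) - F(α, β - 1; γ; z) = (α z / γ) F(α + 1, β; γ + 1; z)` with
`α = c - b`, `β = d - b`, `γ = δ`, `z = 1 - x`, which holds term by term on the series
after an index shift.
-/

open Filter Topology

lemma poch_succ (z : ℝ) (n : ℕ) : poch z (n + 1) = poch z n * (z + n) :=
  Finset.prod_range_succ _ _

lemma poch_succ_eq_mul_poch_add_one (z : ℝ) (n : ℕ) : poch z (n + 1) = z * poch (z + 1) n := by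
  rw [poch, Finset.prod_range_succ', poch]
  push_cast
  rw [add_zero, mul_comm]
  congr 1
  exact Finset.prod_congr rfl fun i _ => by ring

lemma poch_pos {z : ℝ} (hz : 0 < z) (n : ℕ) : 0 < poch z n :=
  Finset.prod_pos fun i _ => by positivity

lemma summable_of_succ_eq_mul_of_tendsto {f q : ℕ → ℝ} {z : ℝ} (hz : |z| < 1)
    (hf : ∀ n, f (n + 1) = f n * q n) (hq : Tendsto q atTop (𝓝 z)) : Summable f := by
  obtain ⟨r, hzr, hr⟩ := exists_between hz
  refine summable_of_ratio_norm_eventually_le hr ?_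
  filter_upwards [hq.abs.eventually_lt_const hzr] with n hn
  rw [hf, Real.norm_eq_abs, Real.norm_eq_abs, abs_mul, mul_comm r]
  exact mul_le_mul_of_nonneg_left hn.le (abs_nonneg _)

noncomputable def twoF1Term (α β γ z : ℝ) (n : ℕ) : ℝ :=
  poch α n * poch β n / (poch γ n * n.factorial) * z ^ n

lemma twoF1_eq_tsum (α β γ z : ℝ) : twoF1 α β γ z = ∑' n, twoF1Term α β γ z n := rfl

lemma twoF1Term_succ {γ : ℝ} (α β z : ℝ) (hγ : 0 < γ) (n : ℕ) :
    twoF1Term α β γ z (n + 1) =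
      twoF1Term α β γ z n * ((α + n) / (1 + n) * ((β + n) / (γ + n)) * z) := by
  have := poch_pos hγ n
  simp only [twoF1Term, poch_succ, Nat.factorial_succ, pow_succ]
  push_cast
  field_simp
  ring

lemma tendsto_twoF1Term_ratio (α β γ z : ℝ) :
    Tendsto (fun n : ℕ => (α + n) / (1 + n) * ((β + n) / (γ + n)) * z) atTop (𝓝 z) := by
  have h (p q : ℝ) : Tendsto (fun n : ℕ => (p + n) / (q + n)) atTop (𝓝 1) := by
    simpa using tendsto_add_mul_div_add_mul_atTop_nhds p q (1 : ℝ) one_ne_zero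
  simpa using ((h α 1).mul (h β γ)).mul_const z

lemma summable_twoF1Term {γ z : ℝ} (α β : ℝ) (hγ : 0 < γ) (hz : |z| < 1) :
    Summable (twoF1Term α β γ z) :=
  summable_of_succ_eq_mul_of_tendsto hz (twoF1Term_succ α β z hγ) (tendsto_twoF1Term_ratio α β γ z)

lemma twoF1_comm (α β γ z : ℝ) : twoF1 α β γ z = twoF1 β α γ z :=
  tsum_congr fun n => by ring

lemma twoF1Term_sub_twoF1Term_sub_one_succ {γ : ℝ} (α β z : ℝ) (hγ : 0 < γ) (n : ℕ) :
    twoF1Term α β γ z (n + 1) - twoF1Term α (β - 1) γ z (n + 1) =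
      α * z / γ * twoF1Term (α + 1) β (γ + 1) z n := by
  have := poch_pos (show 0 < γ + 1 by linarith) n
  have hβ : poch (β - 1) (n + 1) = (β - 1) * poch β n := by
    rw [poch_succ_eq_mul_poch_add_one, sub_add_cancel]
  simp only [twoF1Term, poch_succ_eq_mul_poch_add_one α, poch_succ_eq_mul_poch_add_one γ,
    poch_succ β, hβ, Nat.factorial_succ, pow_succ]
  push_cast
  field_simp
  ring

theorem twoF1_sub_twoF1_sub_one {γ z : ℝ} (α β : ℝ) (hγ : 0 < γ) (hz : |z| < 1) :
    twoF1 α β γ z - twoF1 α (β - 1) γ z = α * z / γ * twoF1 (α + 1) β (γ + 1) z := by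
  rw [twoF1_eq_tsum, twoF1_eq_tsum, twoF1_eq_tsum,
    ← (summable_twoF1Term α β hγ hz).tsum_sub (summable_twoF1Term α (β - 1) hγ hz),
    ((summable_twoF1Term α β hγ hz).sub (summable_twoF1Term α (β - 1) hγ hz)).tsum_eq_zero_add,
    ← tsum_mul_left]
  have h0 : twoF1Term α β γ z 0 - twoF1Term α (β - 1) γ z 0 = 0 := by simp [twoF1Term, poch]
  simp only [twoF1Term_sub_twoF1Term_sub_one_succ α β z hγ, h0, zero_add]

lemma W_b_succ_c_succ (a b c d x : ℝ) :
    W a (b + 1) (c + 1) d x =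
      Real.Gamma (c + 1) * Real.Gamma d /
          (Real.Gamma a * Real.Gamma (b + 1) * Real.Gamma (c + d - a - b)) *
        (x ^ (a - 1) * (1 - x) ^ (c + d - a - b - 1) *
          twoF1 (c - b) (d - b - 1) (c + d - a - b) (1 - x)) := by
  simp only [W]
  ring_nf

lemma W_a_succ_b_succ_d_succ_c_add_two (a b c d x : ℝ) :
    W (a + 1) (b + 1) (d + 1) (c + 2) x =
      Real.Gamma (d + 1) * Real.Gamma (c + 2) /
          (Real.Gamma (a + 1) * Real.Gamma (b + 1) * Real.Gamma (c + d - a - b + 1)) *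
        (x ^ a * (1 - x) ^ (c + d - a - b) *
          twoF1 (c - b + 1) (d - b) (c + d - a - b + 1) (1 - x)) := by
  simp only [W]
  rw [twoF1_comm]
  ring_nf

/-- First component of the matrix identity
`x·Φ(x)·(W(x;a,b;c,d), W(x;a,b+1;c+1,d))ᵀ = (W(x;a+1,b+1;d+1,c+2), W(x;a+1,b+2;d+2,c+2))ᵀ`. -/
theorem weight_shift_identity_first_component (a b c d : ℝ)
    (ha : 0 < a) (hb : 0 < b) (hc : 0 < c) (hd : 0 < d)
    (hcd : max a b < min c d) :
    ∀ x ∈ Set.Ioo (0 : ℝ) 1,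
      x * (((c + 1) * d) / (a * (c - b))) *
          ((c / b) * W a b c d x - W a (b + 1) (c + 1) d x) =
        W (a + 1) (b + 1) (d + 1) (c + 2) x := by
  rintro x ⟨hx0, hx1⟩
  have hbc : b < c := (le_max_right a b).trans_lt (hcd.trans_le (min_le_left c d))
  have hδ : 0 < c + d - a - b := by
    linarith [(le_max_left a b).trans_lt (hcd.trans_le (min_le_right c d))]
  have hz : |1 - x| < 1 := by rw [abs_of_pos (by linarith)]; linarith
  have hcontig : twoF1 (c - b) (d - b - 1) (c + d - a - b) (1 - x) =
      twoF1 (c - b) (d - b) (c + d - a - b) (1 - x) - (c - b) * (1 - x) / (c + d - a - b) *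
        twoF1 (c - b + 1) (d - b) (c + d - a - b + 1) (1 - x) := by
    linarith [twoF1_sub_twoF1_sub_one (c - b) (d - b) hδ hz]
  rw [W_b_succ_c_succ, W_a_succ_b_succ_d_succ_c_add_two, W, Real.rpow_sub_one hx0.ne',
    Real.rpow_sub_one (by linarith : 1 - x ≠ 0), hcontig,
    show c + 2 = c + 1 + 1 by ring, Real.Gamma_add_one (by linarith : c + 1 ≠ 0),
    Real.Gamma_add_one hc.ne', Real.Gamma_add_one ha.ne', Real.Gamma_add_one hb.ne',
    Real.Gamma_add_one hd.ne', Real.Gamma_add_one hδ.ne']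
  have := Real.Gamma_pos_of_pos ha
  have := Real.Gamma_pos_of_pos hb
  have := Real.Gamma_pos_of_pos hδ
  have : c - b ≠ 0 := by linarith
  have : 1 - x ≠ 0 := by linarith
  field_simp
  ring
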